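/- arXiv:0712.2815 — 2 statements merged into one kernel-verified Lean document; each statement's English description precedes it below -/
import Mathlib

section
/- Let P_1,…,P_k and Q_1,…,Q_k be points of (K^×)^n. Suppose that for all but finitely many primes 𝔭 of K and for all positive integers m_1,…,m_k, if ∏_{i=1}^k P_i^{m_i} reduces to the identity of ((O_K/𝔭)^×)^n then ∏_{i=1}^k Q_i^{m_i} also reduces to the identity. Then for every i = 1,…,k and for all but finitely many primes 𝔭 of K, the order of (Q_i mod 𝔭) divides the order of (P_i mod 𝔭). -/
/-!
Let `H_𝔭 ⊆ Kˣ` be the subgroup of elements reducing to `1` modulo `𝔭`; then `redOrder K 𝔭 P`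
is the order of the image of `P` in `(Kˣ ⧸ H_𝔭)ⁿ`. At all but finitely many `𝔭` the
coordinates of every `P i` are `𝔭`-units, so `N = #(𝓞 K ⧸ 𝔭)ˣ` kills every `P i`. Applying the
hypothesis to the exponent vectors `(N, …, N)` and `(N, …, N + d, …, N)`, with `d` the order of
`P i`, and dividing, gives `Q i ^ d ≡ 1`.
-/

open NumberField

/-- `x ≡ 1 (mod 𝔭)` for `x ∈ K`: there is a representation `x = a/b` with `a, b`
integral, `b ∉ 𝔭` and `a ≡ b (mod 𝔭)`. -/
def RedOne (K : Type*) [Field K] [NumberField K] (𝔭 : Ideal (𝓞 K)) (x : K) : Prop :=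
  ∃ a b : 𝓞 K, b ∉ 𝔭 ∧ (algebraMap (𝓞 K) K b) * x = algebraMap (𝓞 K) K a ∧ a - b ∈ 𝔭

/-- The order of the reduction of `P ∈ (K^×)^n` modulo `𝔭`: the least `k > 0` such that
every coordinate of `P^k` reduces to `1` modulo `𝔭` (junk value `0` at the finitely many
bad primes, where no such `k` exists). -/
noncomputable def redOrder (K : Type*) [Field K] [NumberField K] {n : ℕ}
    (𝔭 : Ideal (𝓞 K)) (P : Fin n → Kˣ) : ℕ :=
  sInf {k | 0 < k ∧ ∀ i, RedOne K 𝔭 ((P i : K) ^ k)}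

section RedOne

variable {K : Type*} [Field K] [NumberField K] {𝔭 : Ideal (𝓞 K)}

theorem RedOne.ne_zero {x : K} (h : RedOne K 𝔭 x) : x ≠ 0 := by
  rintro rfl
  obtain ⟨a, b, hb, hab, hm⟩ := h
  obtain rfl : a = 0 := FaithfulSMul.algebraMap_injective (𝓞 K) K (by simpa using hab.symm)
  exact hb (by simpa using 𝔭.neg_mem hm)

theorem RedOne.one (h𝔭 : 𝔭 ≠ ⊤) : RedOne K 𝔭 1 :=
  ⟨1, 1, fun h => h𝔭 ((Ideal.eq_top_iff_one _).2 h), by simp, by simp⟩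

theorem RedOne.mul [𝔭.IsPrime] {x y : K} (hx : RedOne K 𝔭 x) (hy : RedOne K 𝔭 y) :
    RedOne K 𝔭 (x * y) := by
  obtain ⟨a, b, hb, hab, hm⟩ := hx
  obtain ⟨c, d, hd, hcd, hm'⟩ := hy
  refine ⟨a * c, b * d, fun h => (Ideal.IsPrime.mem_or_mem ‹_› h).elim hb hd, ?_, ?_⟩
  · rw [map_mul, map_mul, ← hab, ← hcd]
    ring
  · rw [show a * c - b * d = (a - b) * c + b * (c - d) by ring]
    exact 𝔭.add_mem (𝔭.mul_mem_right _ hm) (𝔭.mul_mem_left _ hm')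

theorem RedOne.inv {x : K} (h : RedOne K 𝔭 x) : RedOne K 𝔭 x⁻¹ := by
  have hx := h.ne_zero
  obtain ⟨a, b, hb, hab, hm⟩ := h
  have ha : a ∉ 𝔭 := fun ha => hb (by simpa using 𝔭.sub_mem ha hm)
  refine ⟨b, a, ha, ?_, by simpa using 𝔭.neg_mem hm⟩
  rw [← hab]
  field_simp

variable (𝔭) in
def redOneSubgroup [𝔭.IsPrime] : Subgroup Kˣ where
  carrier := {x | RedOne K 𝔭 x}
  one_mem' := RedOne.one Ideal.IsPrime.ne_top'
  mul_mem' := RedOne.mul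
  inv_mem' {x} (hx : RedOne K 𝔭 x) := by simpa using hx.inv

@[simp]
theorem mem_redOneSubgroup [𝔭.IsPrime] {x : Kˣ} : x ∈ redOneSubgroup 𝔭 ↔ RedOne K 𝔭 x :=
  Iff.rfl

end RedOne

section Reduction

variable {K : Type*} [Field K] [NumberField K] (𝔭 : Ideal (𝓞 K)) [𝔭.IsPrime]

def redHom (κ : Type*) : (κ → Kˣ) →* (κ → Kˣ ⧸ redOneSubgroup 𝔭) :=
  (QuotientGroup.mk' _).compLeft κ

variable {ι κ : Type*}

theorem redHom_eq_one_iff (x : κ → Kˣ) : redHom 𝔭 κ x = 1 ↔ ∀ j, RedOne K 𝔭 (x j) := by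
  simp [redHom, funext_iff]

theorem prod_redHom_pow_eq_one_iff [Fintype ι] (P : ι → κ → Kˣ) (m : ι → ℕ) :
    ∏ i, redHom 𝔭 κ (P i) ^ m i = 1 ↔ ∀ j, RedOne K 𝔭 (∏ i, (P i j : K) ^ m i) := by
  convert redHom_eq_one_iff 𝔭 (∏ i, P i ^ m i) using 1 <;> simp

/-- Both sides are `0` when no positive power of `P` reduces to `1`. -/
theorem redOrder_eq_orderOf_redHom {n : ℕ} (P : Fin n → Kˣ) :
    redOrder K 𝔭 P = orderOf (redHom 𝔭 (Fin n) P) := by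
  rw [Pi.orderOf_eq_sInf, redOrder]
  congr 1
  ext k
  have h := redHom_eq_one_iff 𝔭 (P ^ k)
  simp only [map_pow, funext_iff, Pi.pow_apply, Pi.one_apply, Units.val_pow_eq_pow_val] at h
  simp only [Set.mem_ofPred_eq, orderOf_dvd_iff_pow_eq_one, h]

end Reduction

theorem Ideal.pow_card_units_quotient_sub_one_mem {R : Type*} [CommRing R] {𝔪 : Ideal R}
    [𝔪.IsMaximal] {a : R} (ha : a ∉ 𝔪) : a ^ Nat.card (R ⧸ 𝔪)ˣ - 1 ∈ 𝔪 := by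
  let := Ideal.Quotient.field 𝔪
  have ha' : Ideal.Quotient.mk 𝔪 a ≠ 0 := fun h => ha (Ideal.Quotient.eq_zero_iff_mem.1 h)
  rw [← Ideal.Quotient.eq_zero_iff_mem, map_sub, map_pow, map_one, sub_eq_zero,
    ← Units.val_mk0 ha', ← Units.val_pow_eq_pow_val, pow_card_eq_one', Units.val_one]

theorem IsDedekindDomain.finite_setOf_isMaximal_mem {R : Type*} [CommRing R]
    [IsDedekindDomain R] {a : R} (ha : a ≠ 0) :
    {𝔪 : Ideal R | 𝔪.IsMaximal ∧ a ∈ 𝔪}.Finite := by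
  have hspan : Ideal.span {a} ≠ 0 := by simpa [Ideal.span_singleton_eq_bot] using ha
  refine ((Ideal.finite_factors hspan).image (·.asIdeal)).subset ?_
  rintro 𝔪 ⟨hmax, hmem⟩
  exact ⟨⟨𝔪, hmax.isPrime, fun h => ha (by simpa [h] using hmem)⟩,
    Ideal.dvd_iff_le.2 ((Ideal.span_singleton_le_iff_mem _).2 hmem), rfl⟩

section Fermat

variable {K : Type*} [Field K] [NumberField K]

theorem card_units_quotient_pos (𝔭 : Ideal (𝓞 K)) [𝔭.IsMaximal] :
    0 < Nat.card (𝓞 K ⧸ 𝔭)ˣ := by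
  have := Ideal.finiteQuotientOfFreeOfNeBot 𝔭
    (Ring.ne_bot_of_isMaximal_of_not_isField ‹_› (RingOfIntegers.not_isField K))
  exact Nat.card_pos

theorem redOne_pow_card_units {𝔭 : Ideal (𝓞 K)} [𝔭.IsMaximal] {a b : 𝓞 K} {x : K}
    (ha : a ∉ 𝔭) (hb : b ∉ 𝔭) (hx : algebraMap (𝓞 K) K b * x = algebraMap (𝓞 K) K a) :
    RedOne K 𝔭 (x ^ Nat.card (𝓞 K ⧸ 𝔭)ˣ) := by
  refine ⟨a ^ Nat.card (𝓞 K ⧸ 𝔭)ˣ, b ^ Nat.card (𝓞 K ⧸ 𝔭)ˣ,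
    fun h => hb ((Ideal.IsMaximal.isPrime ‹_›).mem_of_pow_mem _ h), ?_, ?_⟩
  · rw [map_pow, map_pow, ← mul_pow, hx]
  · simpa using 𝔭.sub_mem (Ideal.pow_card_units_quotient_sub_one_mem ha)
      (Ideal.pow_card_units_quotient_sub_one_mem hb)

theorem eventually_redOne_pow_card_units (x : Kˣ) :
    ∀ᶠ 𝔭 in Filter.cofinite, ∀ _ : 𝔭.IsMaximal, RedOne K 𝔭 ((x : K) ^ Nat.card (𝓞 K ⧸ 𝔭)ˣ) := by
  obtain ⟨a, b, hb, hx⟩ := IsFractionRing.div_surjective (A := 𝓞 K) (x : K)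
  have ha : a ≠ 0 := by
    rintro rfl
    exact x.ne_zero (by simp [← hx])
  have hb : b ≠ 0 := nonZeroDivisors.ne_zero hb
  filter_upwards [(IsDedekindDomain.finite_setOf_isMaximal_mem ha).eventually_cofinite_notMem,
    (IsDedekindDomain.finite_setOf_isMaximal_mem hb).eventually_cofinite_notMem]
    with 𝔭 ha𝔭 hb𝔭 hmax
  exact redOne_pow_card_units (fun h => ha𝔭 ⟨hmax, h⟩) (fun h => hb𝔭 ⟨hmax, h⟩)
    (by rw [← hx, mul_div_cancel₀ _ (by simpa using hb)])

end Fermat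

theorem orderOf_dvd_orderOf_of_prod_pow_eq_one {A ι : Type*} [CommGroup A] [Fintype ι]
    {p q : ι → A} {N : ℕ} (hN : 0 < N) (hpN : ∀ i, p i ^ N = 1)
    (hpq : ∀ m : ι → ℕ, (∀ i, 0 < m i) → ∏ i, p i ^ m i = 1 → ∏ i, q i ^ m i = 1) (i : ι) :
    orderOf (q i) ∣ orderOf (p i) := by
  classical
  have prod_pow_add (r : ι → A) (d : ℕ) :
      ∏ j, r j ^ (N + (Pi.single i d : ι → ℕ) j) = (∏ j, r j ^ N) * r i ^ d := by
    simp only [pow_add, Finset.prod_mul_distrib]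
    congr 1
    rw [Fintype.prod_eq_single i fun j hj => by rw [Pi.single_eq_of_ne hj, pow_zero],
      Pi.single_eq_same]
  have hqN : ∏ j, q j ^ N = 1 := hpq (fun _ => N) (fun _ => hN) (by simp [hpN])
  have hqd := hpq (fun j => N + (Pi.single i (orderOf (p i)) : ι → ℕ) j) (fun _ => by omega)
    (by rw [prod_pow_add, pow_orderOf_eq_one, mul_one]; simp [hpN])
  rw [prod_pow_add, hqN, one_mul] at hqd
  exact orderOf_dvd_of_pow_eq_one hqd

/-- Remark 14: condition (MSP) implies the pairwise support condition, in the
split-torus case. -/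
theorem msp_implies_pairwise_sp_split_torus
    {K : Type*} [Field K] [NumberField K] {n k : ℕ}
    (P Q : Fin k → Fin n → Kˣ)
    (hyp : ∃ T : Finset (Ideal (𝓞 K)), ∀ 𝔭 : Ideal (𝓞 K), 𝔭.IsMaximal → 𝔭 ∉ T →
      ∀ m : Fin k → ℕ, (∀ i, 0 < m i) →
        (∀ j, RedOne K 𝔭 (∏ i, (P i j : K) ^ m i)) →
        (∀ j, RedOne K 𝔭 (∏ i, (Q i j : K) ^ m i))) :
    ∀ i : Fin k, ∃ T : Finset (Ideal (𝓞 K)), ∀ 𝔭 : Ideal (𝓞 K), 𝔭.IsMaximal → 𝔭 ∉ T →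
      redOrder K 𝔭 (Q i) ∣ redOrder K 𝔭 (P i) := by
  intro i
  obtain ⟨T, hT⟩ := hyp
  have hgood : ∀ᶠ 𝔭 in Filter.cofinite, 𝔭 ∉ T ∧
      ∀ i' j, ∀ _ : 𝔭.IsMaximal, RedOne K 𝔭 ((P i' j : K) ^ Nat.card (𝓞 K ⧸ 𝔭)ˣ) := by
    simp only [Filter.eventually_and, Filter.eventually_all]
    exact ⟨T.eventually_cofinite_notMem, fun i' j => eventually_redOne_pow_card_units _⟩
  refine ⟨(Filter.eventually_cofinite.1 hgood).toFinset, fun 𝔭 hmax h𝔭 => ?_⟩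
  obtain ⟨h𝔭T, hP⟩ := not_not.1 fun h => h𝔭 ((Set.Finite.mem_toFinset _).2 h)
  rw [redOrder_eq_orderOf_redHom, redOrder_eq_orderOf_redHom]
  refine orderOf_dvd_orderOf_of_prod_pow_eq_one (p := fun i' => redHom 𝔭 _ (P i'))
    (q := fun i' => redHom 𝔭 _ (Q i')) (card_units_quotient_pos 𝔭) (fun i' => ?_)
    (fun m hm => ?_) i
  · rw [← map_pow, redHom_eq_one_iff]
    simpa using fun j => hP i' j hmax
  · simpa only [prod_redHom_pow_eq_one_iff] using hT 𝔭 hmax h𝔭T m hm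
end

section
/- Let S be a nonempty finite set of rational primes and let m be the product of the primes in S. Let ζ ∈ K^× be a primitive m-th root of unity and let R, W ∈ K^× be multiplicatively independent. Set P = (R, ζ) and Q = (W, 1) in (K^×)^2. Then: (a) for all but finitely many primes 𝔭 of K, m divides the order of (P mod 𝔭) (so for every ℓ ∈ S the condition 'ℓ ∤ order of (P mod 𝔭) implies ℓ ∤ order of (Q mod 𝔭)' holds vacuously); and (b) there is no matrix A ∈ M_2(ℤ) and nonzero integer c with A·P = Q^c coordinatewise, i.e. no nonzero power of Q lies in the M_2(ℤ)-orbit of P. -/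
open NumberField

/-! The reduction of `ζ` modulo `𝔭` has order exactly `m` unless `𝔭` contains one of the
finitely many nonzero elements `ζ^j - 1`, `0 < j < m`. Part (b) is a computation in `K^×`:
raising `R^a ζ^b = W^c` to the `m`-th power kills `ζ`, and independence of `R, W` forces `c = 0`. -/

section PrimitiveRoot

variable {A : Type*} [CommRing A] [IsDomain A] {ζ : A} {m : ℕ}

theorem IsPrimitiveRoot.finite_setOf_pow_sub_one_mem [Ring.HasFiniteQuotients A]
    (hζ : IsPrimitiveRoot ζ m) (hm : m ≠ 0) :
    {I : Ideal A | ∃ k, ζ ^ k - 1 ∈ I ∧ ¬ m ∣ k}.Finite := by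
  let x := ∏ j ∈ Finset.Ioo 0 m, (ζ ^ j - 1)
  have hx : x ≠ 0 := Finset.prod_ne_zero_iff.mpr fun j hj ↦ sub_ne_zero.mpr <|
    hζ.pow_ne_one_of_pos_of_lt (Finset.mem_Ioo.mp hj).1.ne' (Finset.mem_Ioo.mp hj).2
  refine (Ring.HasFiniteQuotients.finite_setOfPred_mem x hx).subset ?_
  rintro I ⟨k, hk, hmk⟩
  have hmod : k % m ∈ Finset.Ioo 0 m :=
    Finset.mem_Ioo.mpr ⟨Nat.pos_of_ne_zero (mt Nat.dvd_of_mod_eq_zero hmk),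
      Nat.mod_lt k (Nat.pos_of_ne_zero hm)⟩
  have hpow : ζ ^ (k % m) = ζ ^ k := hζ.eq_orderOf ▸ pow_mod_orderOf ζ k
  exact Ideal.mem_of_dvd _ (Finset.dvd_prod_of_mem _ hmod) (hpow ▸ hk)

end PrimitiveRoot

section Reduction

variable {K : Type*} [Field K] [NumberField K]

theorem RedOne.sub_one_mem {𝔭 : Ideal (𝓞 K)} [𝔭.IsPrime] {z : 𝓞 K}
    (h : RedOne K 𝔭 (algebraMap (𝓞 K) K z)) : z - 1 ∈ 𝔭 := by
  obtain ⟨a, b, hb, hba, hab⟩ := h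
  have hba' : b * z = a := FaithfulSMul.algebraMap_injective (𝓞 K) K (by simpa using hba)
  have : b * (z - 1) ∈ 𝔭 := by rwa [mul_sub, mul_one, hba']
  exact (Ideal.IsPrime.mem_or_mem ‹_› this).resolve_left hb

theorem IsPrimitiveRoot.exists_finset_dvd_of_redOne {ζ : K} {m : ℕ}
    (hζ : IsPrimitiveRoot ζ m) (hm : m ≠ 0) :
    ∃ T : Finset (Ideal (𝓞 K)), ∀ 𝔭 : Ideal (𝓞 K), 𝔭.IsPrime → 𝔭 ∉ T →
      ∀ k, RedOne K 𝔭 (ζ ^ k) → m ∣ k := by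
  let z : 𝓞 K := ⟨ζ, hζ.isIntegral (Nat.pos_of_ne_zero hm)⟩
  have hz : IsPrimitiveRoot z m :=
    hζ.of_map_of_injective (f := algebraMap (𝓞 K) K) (FaithfulSMul.algebraMap_injective _ _)
  refine ⟨(hz.finite_setOf_pow_sub_one_mem hm).toFinset, fun 𝔭 _ h𝔭 k hk ↦ ?_⟩
  by_contra hmk
  refine h𝔭 ((Set.Finite.mem_toFinset _).mpr ⟨k, RedOne.sub_one_mem ?_, hmk⟩)
  rw [map_pow]
  exact hk

theorem dvd_redOrder {n : ℕ} {𝔭 : Ideal (𝓞 K)} {P : Fin n → Kˣ} (i : Fin n) {m : ℕ}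
    (h : ∀ k, RedOne K 𝔭 ((P i : K) ^ k) → m ∣ k) : m ∣ redOrder K 𝔭 P := by
  rcases Set.eq_empty_or_nonempty {k | 0 < k ∧ ∀ i, RedOne K 𝔭 ((P i : K) ^ k)} with he | hne
  · simp only [redOrder, he, Nat.sInf_empty, dvd_zero]
  · exact h _ ((Nat.sInf_mem hne).2 i)

end Reduction

theorem eq_zero_of_mul_zpow_eq_zpow {G : Type*} [CommGroup G] {R W ζ : G} {m : ℕ}
    (hζ : ζ ^ m = 1) (hm : m ≠ 0) (hind : ∀ a b : ℤ, R ^ a * W ^ b = 1 → a = 0 ∧ b = 0)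
    {a b c : ℤ} (h : R ^ a * ζ ^ b = W ^ c) : c = 0 := by
  have hRW : R ^ (a * m) = W ^ (c * m) := by
    calc R ^ (a * m) = (R ^ a * ζ ^ b) ^ (m : ℤ) := by
          rw [mul_zpow, ← zpow_mul ζ, mul_comm b, zpow_mul ζ, zpow_natCast ζ, hζ,
            one_zpow, mul_one, zpow_mul]
      _ = W ^ (c * m) := by rw [h, zpow_mul]
  have := (hind (a * m) (-(c * m)) (by rw [hRW, zpow_neg, mul_inv_cancel])).2
  simpa [hm] using this

theorem rsp_finite_S_counterexample_general
    {K : Type*} [Field K] [NumberField K]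
    (S : Finset ℕ) (hSprime : ∀ ℓ ∈ S, ℓ.Prime)
    (m : ℕ) (hm : m = ∏ ℓ ∈ S, ℓ)
    (ζ : Kˣ) (hζ : IsPrimitiveRoot ζ m)
    (R W : Kˣ) (hind : ∀ a b : ℤ, R ^ a * W ^ b = 1 → a = 0 ∧ b = 0)
    (P Q : Fin 2 → Kˣ) (hP : P = ![R, ζ]) (hQ : Q = ![W, 1]) :
    (∃ T : Finset (Ideal (𝓞 K)), ∀ 𝔭 : Ideal (𝓞 K), 𝔭.IsMaximal → 𝔭 ∉ T →
      m ∣ redOrder K 𝔭 P) ∧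
    ¬ ∃ (A : Matrix (Fin 2) (Fin 2) ℤ) (c : ℤ), c ≠ 0 ∧
      ∀ j, (∏ i, P i ^ A j i) = Q j ^ c := by
  have hm0 : m ≠ 0 := hm ▸ Finset.prod_ne_zero_iff.mpr fun ℓ hℓ ↦ (hSprime ℓ hℓ).ne_zero
  constructor
  · obtain ⟨T, hT⟩ := (IsPrimitiveRoot.coe_units_iff.mpr hζ).exists_finset_dvd_of_redOne hm0
    exact ⟨T, fun 𝔭 h𝔭 h𝔭T ↦ dvd_redOrder 1 (hP ▸ hT 𝔭 h𝔭.isPrime h𝔭T)⟩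
  · rintro ⟨A, c, hc, hAc⟩
    have h0 := hAc 0
    simp only [hP, hQ, Fin.prod_univ_two, Matrix.cons_val_zero, Matrix.cons_val_one] at h0
    exact hc (eq_zero_of_mul_zpow_eq_zpow hζ.pow_eq_one hm0 hind h0)

/-- The example of Section 4: the set `S` in condition (RSP) needs in general to be
infinite, in the multiplicative-group case. -/
theorem rsp_finite_S_counterexample
    {K : Type*} [Field K] [NumberField K]
    (S : Finset ℕ) (hSne : S.Nonempty) (hSprime : ∀ ℓ ∈ S, ℓ.Prime)
    (m : ℕ) (hm : m = ∏ ℓ ∈ S, ℓ)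
    (ζ : Kˣ) (hζ : IsPrimitiveRoot ζ m)
    (R W : Kˣ) (hind : ∀ a b : ℤ, R ^ a * W ^ b = 1 → a = 0 ∧ b = 0)
    (P Q : Fin 2 → Kˣ) (hP : P = ![R, ζ]) (hQ : Q = ![W, 1]) :
    (∃ T : Finset (Ideal (𝓞 K)), ∀ 𝔭 : Ideal (𝓞 K), 𝔭.IsMaximal → 𝔭 ∉ T →
      m ∣ redOrder K 𝔭 P) ∧
    ¬ ∃ (A : Matrix (Fin 2) (Fin 2) ℤ) (c : ℤ), c ≠ 0 ∧
      ∀ j, (∏ i, P i ^ A j i) = Q j ^ c :=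
  rsp_finite_S_counterexample_general S hSprime m hm ζ hζ R W hind P Q hP hQ
end
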